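/- For every n ≥ 1, the linear cylindrical capacity of the cross-polytope B₁^{2n} = conv{±e₁,…,±e_{2n}} (the unit ball of the ℓ₁-norm on ℝ^{2n}) satisfies c^Z_lin(B₁^{2n}) ≤ π/n. -/

import Mathlib

open MeasureTheory Metric
open scoped BigOperators

noncomputable section

/-- A convex body: compact convex set with nonempty interior. -/
def IsConvexBody {d : ℕ} (K : Set (EuclideanSpace ℝ (Fin d))) : Prop :=
  IsCompact K ∧ Convex ℝ K ∧ (interior K).Nonempty

/-- The standard symplectic form on `ℝ^{2n}` with coordinates ordered
`(x₁, y₁, …, xₙ, yₙ)`: `ω = ∑ dxⱼ ∧ dyⱼ`. -/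
def symplForm (n : ℕ) (u v : EuclideanSpace ℝ (Fin (2 * n))) : ℝ :=
  ∑ j : Fin n,
    (u ⟨2 * (j : ℕ), by have := j.isLt; omega⟩ * v ⟨2 * (j : ℕ) + 1, by have := j.isLt; omega⟩
      - u ⟨2 * (j : ℕ) + 1, by have := j.isLt; omega⟩ * v ⟨2 * (j : ℕ), by have := j.isLt; omega⟩)

/-- A linear map of `ℝ^{2n}` is symplectic if it preserves the standard symplectic form. -/
def IsLinearSymplectic (n : ℕ)
    (S : EuclideanSpace ℝ (Fin (2 * n)) →ₗ[ℝ] EuclideanSpace ℝ (Fin (2 * n))) : Prop :=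
  ∀ u v, symplForm n (S u) (S v) = symplForm n u v

/-- The `k`-th coordinate of a vector (with value `0` if `k` is out of range). -/
def coordOr {m : ℕ} (x : EuclideanSpace ℝ (Fin m)) (k : ℕ) : ℝ :=
  if h : k < m then x ⟨k, h⟩ else 0

/-- The open symplectic cylinder `Z(r) = {x : x₁² + x₂² < r²}`. -/
def symplCylinder (n : ℕ) (r : ℝ) : Set (EuclideanSpace ℝ (Fin (2 * n))) :=
  {x | coordOr x 0 ^ 2 + coordOr x 1 ^ 2 < r ^ 2}

/-- The linear cylindrical capacity. -/
def linCylCapacity (n : ℕ) (U : Set (EuclideanSpace ℝ (Fin (2 * n)))) : ℝ :=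
  sInf {c : ℝ | ∃ r : ℝ, 0 < r ∧ c = Real.pi * r ^ 2 ∧
    ∃ S : EuclideanSpace ℝ (Fin (2 * n)) →ₗ[ℝ] EuclideanSpace ℝ (Fin (2 * n)),
      IsLinearSymplectic n S ∧ S '' U ⊆ symplCylinder n r}

/-- The linear symplectic radius. -/
def linSymplRadius (n : ℕ) (U : Set (EuclideanSpace ℝ (Fin (2 * n)))) : ℝ :=
  sSup {c : ℝ | ∃ r : ℝ, 0 < r ∧ c = Real.pi * r ^ 2 ∧
    ∃ S : EuclideanSpace ℝ (Fin (2 * n)) →ₗ[ℝ] EuclideanSpace ℝ (Fin (2 * n)),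
      IsLinearSymplectic n S ∧ S '' (closedBall (0 : EuclideanSpace ℝ (Fin (2 * n))) r) ⊆ U}

/-- The standard complex structure `J` on `ℝ^{2n}`, sending
`(x₁,y₁,…,xₙ,yₙ)` to `(−y₁,x₁,…,−yₙ,xₙ)`. -/
def Jstd (n : ℕ) (x : EuclideanSpace ℝ (Fin (2 * n))) : EuclideanSpace ℝ (Fin (2 * n)) :=
  WithLp.toLp 2 fun (i : Fin (2 * n)) => if h : (i : ℕ) % 2 = 0
    then - x ⟨(i : ℕ) + 1, by have := i.isLt; omega⟩
    else x ⟨(i : ℕ) - 1, by have := i.isLt; omega⟩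

/-- The support function `x ↦ sup_{y ∈ K} ⟨x, y⟩`. -/
def suppF {d : ℕ} (K : Set (EuclideanSpace ℝ (Fin d))) (x : EuclideanSpace ℝ (Fin d)) : ℝ :=
  sSup ((fun y => (inner ℝ x y : ℝ)) '' K)

/-- The sign vector `ε ∈ {−1/√(2n), 1/√(2n)}^{2n}` associated to `ε : Fin (2n) → Bool`. -/
def signVec (n : ℕ) (ε : Fin (2 * n) → Bool) : EuclideanSpace ℝ (Fin (2 * n)) :=
  WithLp.toLp 2 fun i => (if ε i then 1 else -1) / Real.sqrt (2 * n)

/-- The normalized Rademacher average `s*(K)`. -/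
def sStar (n : ℕ) (K : Set (EuclideanSpace ℝ (Fin (2 * n)))) : ℝ :=
  (1 / 2 ^ (2 * n)) * ∑ ε : Fin (2 * n) → Bool, suppF K (signVec n ε)

/-- The rotation-invariant probability measure on the unit sphere of `ℝ^{2n}`. -/
def sphereProb (n : ℕ) : Measure (sphere (0 : EuclideanSpace ℝ (Fin (2 * n))) 1) :=
  ((volume : Measure (EuclideanSpace ℝ (Fin (2 * n)))).toSphere Set.univ)⁻¹ •
    (volume : Measure (EuclideanSpace ℝ (Fin (2 * n)))).toSphere

/-- Half the mean width `M*(K)`. -/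
def mStar (n : ℕ) (K : Set (EuclideanSpace ℝ (Fin (2 * n)))) : ℝ :=
  ∫ x : sphere (0 : EuclideanSpace ℝ (Fin (2 * n))) 1, suppF K (x : EuclideanSpace ℝ (Fin (2 * n))) ∂(sphereProb n)

/-- The sign `±1` of a boolean. -/
def radSign (b : Bool) : ℝ := if b then 1 else -1

/-- Squared `L²({−1,1}^m, μ; X_K)`-norm of `f`, with respect to the norm
(Minkowski gauge) whose unit ball is `K` and the uniform probability measure `μ`. -/
def radL2Sq {d : ℕ} (m : ℕ) (K : Set (EuclideanSpace ℝ (Fin d)))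
    (f : (Fin m → Bool) → EuclideanSpace ℝ (Fin d)) : ℝ :=
  (1 / 2 ^ m) * ∑ t : Fin m → Bool, gauge K (f t) ^ 2

/-- The Rademacher projection `R_m f = ∑ᵢ (∫ f rᵢ dμ) rᵢ`. -/
def radProj {d : ℕ} (m : ℕ) (f : (Fin m → Bool) → EuclideanSpace ℝ (Fin d)) :
    (Fin m → Bool) → EuclideanSpace ℝ (Fin d) :=
  fun t => ∑ i : Fin m,
    radSign (t i) • ((1 / 2 ^ m : ℝ) • ∑ s : Fin m → Bool, radSign (s i) • f s)

/-- The Rademacher projection (K-convexity) constant `‖Rad‖_{X_K}` of the normed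
space whose unit ball is `K`: `sup_m ‖R_m‖`. -/
def radConst {d : ℕ} (K : Set (EuclideanSpace ℝ (Fin d))) : ℝ :=
  sSup {c : ℝ | ∃ m : ℕ, ∃ f : (Fin m → Bool) → EuclideanSpace ℝ (Fin d),
    radL2Sq m K f ≤ 1 ∧ c = Real.sqrt (radL2Sq m K (radProj m f))}

/-- Volume ratio `Vol(K)/Vol(B^{2n})`. -/
def volRatio {d : ℕ} (K : Set (EuclideanSpace ℝ (Fin d))) : ℝ :=
  (volume K).toReal / (volume (closedBall (0 : EuclideanSpace ℝ (Fin d)) 1)).toReal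


/-- The cross-polytope `B₁^m = conv{±e₁,…,±e_m}`, the unit ball of the `ℓ₁`-norm. -/
def crossPolytope (m : ℕ) : Set (EuclideanSpace ℝ (Fin m)) :=
  convexHull ℝ {x : EuclideanSpace ℝ (Fin m) |
    ∃ i : Fin m, x = EuclideanSpace.single i (1 : ℝ) ∨ x = -EuclideanSpace.single i (1 : ℝ)}


namespace St14

noncomputable def sq (n : ℕ) : ℝ := Real.sqrt n
noncomputable def w (n : ℕ) : Fin n → ℝ := fun j => if j.val = 0 then sq n + 1 else 1
noncomputable def t (n : ℕ) : ℝ := ((n : ℝ) + sq n)⁻¹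

noncomputable def Sfun (n : ℕ) (u : EuclideanSpace ℝ (Fin (2*n))) : EuclideanSpace ℝ (Fin (2*n)) :=
  WithLp.toLp 2 fun i => u i - t n * w n ⟨i.val / 2, by have := i.isLt; omega⟩ *
    ∑ k : Fin n, w n k * u ⟨2 * k.val + i.val % 2, by have := k.isLt; have := i.isLt; omega⟩

noncomputable def S (n : ℕ) : EuclideanSpace ℝ (Fin (2*n)) →ₗ[ℝ] EuclideanSpace ℝ (Fin (2*n)) where
  toFun := Sfun n
  map_add' := by
    intro u v; ext i
    show Sfun n (u + v) i = Sfun n u i + Sfun n v i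
    simp only [Sfun, PiLp.toLp_apply, PiLp.add_apply, mul_add, Finset.sum_add_distrib]
    ring
  map_smul' := by
    intro c u; ext i
    show Sfun n (c • u) i = c * Sfun n u i
    simp only [Sfun, PiLp.toLp_apply, PiLp.smul_apply, smul_eq_mul]
    rw [show ∑ k : Fin n, w n k * (c * u ⟨2*(k:ℕ)+(i:ℕ)%2, by have := k.isLt; have := i.isLt; omega⟩) = c * ∑ k : Fin n, w n k * u ⟨2*(k:ℕ)+(i:ℕ)%2, by have := k.isLt; have := i.isLt; omega⟩ by rw [Finset.mul_sum]; exact Finset.sum_congr rfl fun k _ => by ring]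
    ring

noncomputable def ae (n : ℕ) (u : EuclideanSpace ℝ (Fin (2*n))) : ℝ :=
  ∑ k : Fin n, w n k * u ⟨2 * k.val, by have := k.isLt; omega⟩

noncomputable def ao (n : ℕ) (u : EuclideanSpace ℝ (Fin (2*n))) : ℝ :=
  ∑ k : Fin n, w n k * u ⟨2 * k.val + 1, by have := k.isLt; omega⟩

lemma S_apply_even (n : ℕ) (u : EuclideanSpace ℝ (Fin (2*n))) (j : Fin n)
    (h : 2 * (j:ℕ) < 2 * n) :
    S n u ⟨2 * (j:ℕ), h⟩ = u ⟨2 * (j:ℕ), h⟩ - t n * w n j * ae n u := by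
  show Sfun n u _ = _
  simp only [Sfun, PiLp.toLp_apply, ae]
  have h1 : (⟨2 * (j:ℕ) / 2, by omega⟩ : Fin n) = j := by
    ext; simp [Nat.mul_div_cancel_left _ (by norm_num : 0 < 2)]
  rw [h1]
  congr 1
  congr 1
  apply Finset.sum_congr rfl
  intro k _
  have hidx : (⟨2*(k:ℕ) + 2*(j:ℕ) % 2, by have := k.isLt; omega⟩ : Fin (2*n))
      = ⟨2*(k:ℕ), by have := k.isLt; omega⟩ := by ext; simp [Nat.mul_mod_right]
  rw [hidx]

lemma S_apply_odd (n : ℕ) (u : EuclideanSpace ℝ (Fin (2*n))) (j : Fin n)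
    (h : 2 * (j:ℕ) + 1 < 2 * n) :
    S n u ⟨2 * (j:ℕ) + 1, h⟩ = u ⟨2 * (j:ℕ) + 1, h⟩ - t n * w n j * ao n u := by
  show Sfun n u _ = _
  simp only [Sfun, PiLp.toLp_apply, ao]
  have h1 : (⟨(2 * (j:ℕ) + 1) / 2, by omega⟩ : Fin n) = j := by
    ext; simp; omega
  rw [h1]
  congr 1
  congr 1
  apply Finset.sum_congr rfl
  intro k _
  have hidx : (⟨2*(k:ℕ) + (2*(j:ℕ)+1) % 2, by have := k.isLt; omega⟩ : Fin (2*n))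
      = ⟨2*(k:ℕ)+1, by have := k.isLt; omega⟩ := by ext; simp
  rw [hidx]

lemma S_apply0 (n : ℕ) (hn : 1 ≤ n) (u : EuclideanSpace ℝ (Fin (2*n))) (h : 0 < 2*n) :
    S n u ⟨0, h⟩ = u ⟨0, h⟩ - t n * w n ⟨0, hn⟩ * ae n u := by
  show Sfun n u _ = _
  unfold Sfun ae; simp

lemma S_apply1 (n : ℕ) (hn : 1 ≤ n) (u : EuclideanSpace ℝ (Fin (2*n))) (h : 1 < 2*n) :
    S n u ⟨1, h⟩ = u ⟨1, h⟩ - t n * w n ⟨0, hn⟩ * ao n u := by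
  show Sfun n u _ = _
  unfold Sfun ao; simp

lemma sq_sq (n : ℕ) : sq n ^ 2 = n := Real.sq_sqrt (Nat.cast_nonneg n)

lemma sq_pos (n : ℕ) (hn : 1 ≤ n) : 0 < sq n :=
  Real.sqrt_pos.mpr (by exact_mod_cast hn)

lemma sum_w_sq (n : ℕ) (hn : 1 ≤ n) : ∑ k : Fin n, (w n k)^2 = 2 * n + 2 * sq n := by
  have key : ∀ k : Fin n, (w n k)^2 = 1 + (if k = (⟨0, hn⟩ : Fin n) then (sq n + 1)^2 - 1 else 0) := by
    intro k
    by_cases h : k = (⟨0, hn⟩ : Fin n)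
    · simp [w, h]
    · have : k.val ≠ 0 := fun hk => h (by ext; exact hk)
      simp [w, this, h]
  rw [Finset.sum_congr rfl (fun k _ => key k), Finset.sum_add_distrib, Finset.sum_const,
    Finset.sum_ite_eq' Finset.univ (⟨0, hn⟩ : Fin n)]
  simp only [Finset.mem_univ, if_true, Finset.card_univ, Fintype.card_fin, nsmul_eq_mul, mul_one]
  nlinarith [sq_sq n]

lemma t_mul (n : ℕ) (hn : 1 ≤ n) : t n * ((n:ℝ) + sq n) = 1 := by
  apply inv_mul_cancel₀
  have h1 : (0:ℝ) < n := by exact_mod_cast hn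
  have := sq_pos n hn
  linarith

lemma S_symplectic (n : ℕ) (hn : 1 ≤ n) : IsLinearSymplectic n (S n) := by
  intro u v
  unfold symplForm
  set T := t n with hT
  set A := ae n u
  set B := ao n u
  set C := ae n v
  set D := ao n v
  have expand : ∀ j : Fin n, j ∈ Finset.univ → (S n u ⟨2*(j:ℕ), by have := j.isLt; omega⟩ * S n v ⟨2*(j:ℕ)+1, by have := j.isLt; omega⟩
      - S n u ⟨2*(j:ℕ)+1, by have := j.isLt; omega⟩ * S n v ⟨2*(j:ℕ), by have := j.isLt; omega⟩)
      = (u ⟨2*(j:ℕ), by have := j.isLt; omega⟩ * v ⟨2*(j:ℕ)+1, by have := j.isLt; omega⟩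
        - u ⟨2*(j:ℕ)+1, by have := j.isLt; omega⟩ * v ⟨2*(j:ℕ), by have := j.isLt; omega⟩)
        + ((T*C) * (w n j * u ⟨2*(j:ℕ)+1, by have := j.isLt; omega⟩)
        + (T*B) * (w n j * v ⟨2*(j:ℕ), by have := j.isLt; omega⟩)
        - (T*D) * (w n j * u ⟨2*(j:ℕ), by have := j.isLt; omega⟩)
        - (T*A) * (w n j * v ⟨2*(j:ℕ)+1, by have := j.isLt; omega⟩)
        + (T^2*(A*D - B*C)) * (w n j)^2) := by
    intro j _
    rw [S_apply_even n u j, S_apply_even n v j, S_apply_odd n u j, S_apply_odd n v j]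
    ring
  rw [Finset.sum_congr rfl expand, Finset.sum_add_distrib]
  have h1 : ∑ j : Fin n, ((T*C) * (w n j * u ⟨2*(j:ℕ)+1, by have := j.isLt; omega⟩)
        + (T*B) * (w n j * v ⟨2*(j:ℕ), by have := j.isLt; omega⟩)
        - (T*D) * (w n j * u ⟨2*(j:ℕ), by have := j.isLt; omega⟩)
        - (T*A) * (w n j * v ⟨2*(j:ℕ)+1, by have := j.isLt; omega⟩)
        + (T^2*(A*D - B*C)) * (w n j)^2) = (T*C)*B + (T*B)*C - (T*D)*A - (T*A)*D
          + (T^2*(A*D-B*C)) * (2*n + 2*sq n) := by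
    simp only [Finset.sum_add_distrib, Finset.sum_sub_distrib, ← Finset.mul_sum]
    rw [sum_w_sq n hn]
    rfl
  rw [h1]
  have h2 := t_mul n hn
  have h3 : T^2 * (2*(n:ℝ) + 2*sq n) = 2 * T := by
    have h4 : T^2 * (2*(n:ℝ) + 2*sq n) = 2 * T * (T * ((n:ℝ) + sq n)) := by ring
    rw [h4, h2]; ring
  linear_combination (A*D - B*C) * h3

lemma S_single_even (n : ℕ) (hn : 1 ≤ n) (j : Fin n) (h : 2*(j:ℕ) < 2*n) :
    S n (EuclideanSpace.single (⟨2*(j:ℕ), h⟩ : Fin (2*n)) (1:ℝ)) ⟨0, by omega⟩ = -(sq n)⁻¹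
    ∧ S n (EuclideanSpace.single (⟨2*(j:ℕ), h⟩ : Fin (2*n)) (1:ℝ)) ⟨1, by omega⟩ = 0 := by
  set e := EuclideanSpace.single (⟨2*(j:ℕ), h⟩ : Fin (2*n)) (1:ℝ) with he
  have hae : ae n e = w n j := by
    rw [ae, Finset.sum_eq_single j]
    · rw [he, EuclideanSpace.single_apply, if_pos rfl, mul_one]
    · intro k _ hk
      rw [he, EuclideanSpace.single_apply, if_neg, mul_zero]
      intro hkj
      exact hk (by ext; have : 2*(k:ℕ) = 2*(j:ℕ) := congrArg Fin.val hkj; omega)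
    · intro hj; exact absurd (Finset.mem_univ j) hj
  have hao : ao n e = 0 := by
    rw [ao]
    apply Finset.sum_eq_zero
    intro k _
    rw [he, EuclideanSpace.single_apply, if_neg, mul_zero]
    intro hkj
    have : 2*(k:ℕ)+1 = 2*(j:ℕ) := congrArg Fin.val hkj
    omega
  have hs := sq_pos n hn
  have hsq := sq_sq n
  have hw0 : w n (⟨0,hn⟩ : Fin n) = sq n + 1 := by simp [w]
  have hns : (n:ℝ) + sq n = sq n * (sq n + 1) := by nlinarith
  have htv : t n = (sq n * (sq n + 1))⁻¹ := by rw [t, hns]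
  constructor
  · rw [S_apply0 n hn e (by omega), hae]
    by_cases hj : (j:ℕ) = 0
    · have hwj : w n j = sq n + 1 := by simp [w, hj]
      have he0 : e ⟨0, by omega⟩ = 1 := by
        rw [he, EuclideanSpace.single_apply, if_pos (by ext; simp [hj])]
      rw [he0, hw0, hwj, htv]
      field_simp
      ring
    · have hwj : w n j = 1 := by simp [w, hj]
      have he0 : e ⟨0, by omega⟩ = 0 := by
        rw [he, EuclideanSpace.single_apply, if_neg]
        intro hh
        have h' := congrArg Fin.val hh
        simp at h'
        omega
      rw [he0, hw0, hwj, htv]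
      field_simp
      ring
  · rw [S_apply1 n hn e (by omega), hao, mul_zero, sub_zero, he,
      EuclideanSpace.single_apply, if_neg]
    intro hh
    have h' := congrArg Fin.val hh
    simp at h'
    omega

lemma S_single_odd (n : ℕ) (hn : 1 ≤ n) (j : Fin n) (h : 2*(j:ℕ)+1 < 2*n) :
    S n (EuclideanSpace.single (⟨2*(j:ℕ)+1, h⟩ : Fin (2*n)) (1:ℝ)) ⟨0, by omega⟩ = 0
    ∧ S n (EuclideanSpace.single (⟨2*(j:ℕ)+1, h⟩ : Fin (2*n)) (1:ℝ)) ⟨1, by omega⟩ = -(sq n)⁻¹ := by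
  set e := EuclideanSpace.single (⟨2*(j:ℕ)+1, h⟩ : Fin (2*n)) (1:ℝ) with he
  have hae : ae n e = 0 := by
    rw [ae]
    apply Finset.sum_eq_zero
    intro k _
    rw [he, EuclideanSpace.single_apply, if_neg, mul_zero]
    intro hkj
    have : 2*(k:ℕ) = 2*(j:ℕ)+1 := congrArg Fin.val hkj
    omega
  have hao : ao n e = w n j := by
    rw [ao, Finset.sum_eq_single j]
    · rw [he, EuclideanSpace.single_apply, if_pos rfl, mul_one]
    · intro k _ hk
      rw [he, EuclideanSpace.single_apply, if_neg, mul_zero]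
      intro hkj
      exact hk (by ext; have : 2*(k:ℕ)+1 = 2*(j:ℕ)+1 := congrArg Fin.val hkj; omega)
    · intro hj; exact absurd (Finset.mem_univ j) hj
  have hs := sq_pos n hn
  have hsq := sq_sq n
  have hw0 : w n (⟨0,hn⟩ : Fin n) = sq n + 1 := by simp [w]
  have hns : (n:ℝ) + sq n = sq n * (sq n + 1) := by nlinarith
  have htv : t n = (sq n * (sq n + 1))⁻¹ := by rw [t, hns]
  constructor
  · rw [S_apply0 n hn e (by omega), hae, mul_zero, sub_zero, he,
      EuclideanSpace.single_apply, if_neg]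
    intro hh
    have h' := congrArg Fin.val hh
    simp at h'
  · rw [S_apply1 n hn e (by omega), hao]
    by_cases hj : (j:ℕ) = 0
    · have hwj : w n j = sq n + 1 := by simp [w, hj]
      have he1 : e ⟨1, by omega⟩ = 1 := by
        rw [he, EuclideanSpace.single_apply, if_pos (by ext; simp [hj])]
      rw [he1, hw0, hwj, htv]
      field_simp
      ring
    · have hwj : w n j = 1 := by simp [w, hj]
      have he1 : e ⟨1, by omega⟩ = 0 := by
        rw [he, EuclideanSpace.single_apply, if_neg]
        intro hh
        have h' := congrArg Fin.val hh
        simp at h'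
        omega
      rw [he1, hw0, hwj, htv]
      field_simp
      ring

lemma vertex_val (n : ℕ) (hn : 1 ≤ n) (i : Fin (2*n)) :
    (S n (EuclideanSpace.single i (1:ℝ)) ⟨0, by omega⟩)^2
      + (S n (EuclideanSpace.single i (1:ℝ)) ⟨1, by omega⟩)^2 = 1 / n := by
  have hs := sq_pos n hn
  have hsq := sq_sq n
  have hn0 : (0:ℝ) < n := by exact_mod_cast hn
  have key : ∀ a b : ℝ, (a = -(sq n)⁻¹ ∧ b = 0) ∨ (a = 0 ∧ b = -(sq n)⁻¹) → a^2 + b^2 = 1/n := by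
    rintro a b (⟨ha, hb⟩ | ⟨ha, hb⟩) <;> subst ha <;> subst hb <;>
      · field_simp
        nlinarith
  apply key
  rcases Nat.even_or_odd i.val with he | ho
  · left
    obtain ⟨j, hj⟩ := he
    have hjn : j < n := by have := i.isLt; omega
    have hi : i = (⟨2*j, by omega⟩ : Fin (2*n)) := by ext; simp; omega
    have h2 : 2*((⟨j, hjn⟩ : Fin n):ℕ) < 2*n := by simpa using (by omega : 2*j < 2*n)
    have := S_single_even n hn ⟨j, hjn⟩ h2
    rw [hi]
    exact this
  · right
    obtain ⟨j, hj⟩ := ho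
    have hjn : j < n := by have := i.isLt; omega
    have hi : i = (⟨2*j+1, by omega⟩ : Fin (2*n)) := by ext; simp; omega
    have h2 : 2*((⟨j, hjn⟩ : Fin n):ℕ)+1 < 2*n := by simpa using (by omega : 2*j+1 < 2*n)
    have := S_single_odd n hn ⟨j, hjn⟩ h2
    rw [hi]
    exact this

lemma cylinder_convex (n : ℕ) (hn : 1 ≤ n) (r : ℝ) : Convex ℝ (symplCylinder n r) := by
  have h0 : (0:ℕ) < 2*n := by omega
  have h1 : (1:ℕ) < 2*n := by omega
  have hf : ConvexOn ℝ Set.univ (fun x : EuclideanSpace ℝ (Fin (2*n)) =>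
      (EuclideanSpace.projₗ (⟨0, h0⟩ : Fin (2*n)) x)^2 + (EuclideanSpace.projₗ (⟨1, h1⟩ : Fin (2*n)) x)^2) := by
    apply ConvexOn.add
    · have := ((even_two).convexOn_pow (𝕜 := ℝ)).comp_linearMap (EuclideanSpace.projₗ (⟨0, h0⟩ : Fin (2*n)))
      exact this
    · have := ((even_two).convexOn_pow (𝕜 := ℝ)).comp_linearMap (EuclideanSpace.projₗ (⟨1, h1⟩ : Fin (2*n)))
      exact this
  have hconv := hf.convex_lt (r^2)
  have hset : symplCylinder n r = {x : EuclideanSpace ℝ (Fin (2*n)) | x ∈ Set.univ ∧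
      (EuclideanSpace.projₗ (⟨0, h0⟩ : Fin (2*n)) x)^2 + (EuclideanSpace.projₗ (⟨1, h1⟩ : Fin (2*n)) x)^2 < r^2} := by
    ext x
    simp only [symplCylinder, Set.mem_setOf_eq, Set.mem_univ, true_and, coordOr, dif_pos h0, dif_pos h1]
    rfl
  rw [hset]
  exact hconv

lemma image_subset_cyl (n : ℕ) (hn : 1 ≤ n) (r : ℝ) (hr : 1/(n:ℝ) < r^2) :
    (S n) '' (crossPolytope (2*n)) ⊆ symplCylinder n r := by
  rw [crossPolytope, LinearMap.image_convexHull]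
  apply convexHull_min ?_ (cylinder_convex n hn r)
  rintro y ⟨x, ⟨i, hx | hx⟩, rfl⟩ <;>
  · subst hx
    show coordOr _ 0 ^ 2 + coordOr _ 1 ^ 2 < r^2
    have h0 : (0:ℕ) < 2*n := by omega
    have h1 : (1:ℕ) < 2*n := by omega
    simp only [coordOr, dif_pos h0, dif_pos h1, map_neg]
    first
    | (calc (S n (EuclideanSpace.single i 1) ⟨0, h0⟩)^2 + (S n (EuclideanSpace.single i 1) ⟨1, h1⟩)^2
          = 1/n := vertex_val n hn i
        _ < r^2 := hr)
    | (show ((-(S n (EuclideanSpace.single i 1))) ⟨0, h0⟩)^2 + ((-(S n (EuclideanSpace.single i 1))) ⟨1, h1⟩)^2 < r^2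
       rw [PiLp.neg_apply, PiLp.neg_apply, neg_sq, neg_sq]
       calc (S n (EuclideanSpace.single i 1) ⟨0, h0⟩)^2 + (S n (EuclideanSpace.single i 1) ⟨1, h1⟩)^2
          = 1/n := vertex_val n hn i
        _ < r^2 := hr)

end St14

/-- `c^Z_lin(B₁^{2n}) ≤ π/n`. -/
theorem statement14 (n : ℕ) (hn : 1 ≤ n) :
    linCylCapacity n (crossPolytope (2 * n)) ≤ Real.pi / n := by
  have hn0 : (0:ℝ) < n := by exact_mod_cast hn
  have hpi := Real.pi_pos
  apply le_of_forall_pos_le_add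
  intro ε hε
  set r := Real.sqrt (1/n + ε/Real.pi) with hrdef
  have hrpos : 0 < r := Real.sqrt_pos.mpr (by positivity)
  have hr2 : r^2 = 1/n + ε/Real.pi := Real.sq_sqrt (by positivity)
  have hrgt : 1/(n:ℝ) < r^2 := by
    have hepi : (0:ℝ) < ε/Real.pi := div_pos hε hpi
    rw [hr2]; linarith
  have hval : Real.pi * r^2 = Real.pi/n + ε := by
    rw [hr2]; field_simp
  have hbdd : BddBelow {c : ℝ | ∃ r : ℝ, 0 < r ∧ c = Real.pi * r ^ 2 ∧
      ∃ S : EuclideanSpace ℝ (Fin (2 * n)) →ₗ[ℝ] EuclideanSpace ℝ (Fin (2 * n)),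
        IsLinearSymplectic n S ∧ S '' (crossPolytope (2*n)) ⊆ symplCylinder n r} := by
    refine ⟨0, ?_⟩
    rintro c ⟨r', hr', hc, -⟩
    rw [hc]; positivity
  have hmem : Real.pi * r^2 ∈ {c : ℝ | ∃ r : ℝ, 0 < r ∧ c = Real.pi * r ^ 2 ∧
      ∃ S : EuclideanSpace ℝ (Fin (2 * n)) →ₗ[ℝ] EuclideanSpace ℝ (Fin (2 * n)),
        IsLinearSymplectic n S ∧ S '' (crossPolytope (2*n)) ⊆ symplCylinder n r} :=
    ⟨r, hrpos, rfl, St14.S n, St14.S_symplectic n hn, St14.image_subset_cyl n hn r hrgt⟩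
  calc linCylCapacity n (crossPolytope (2 * n)) ≤ Real.pi * r^2 := csInf_le hbdd hmem
    _ = Real.pi/n + ε := hval

end
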